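/- arXiv:math/0505111 — 9 statements merged into one kernel-verified Lean document; each statement's English description precedes it below -/
import Mathlib

section
/- In the ring ℂ[β, v₁, v₂, γ, w₁, w₂]/I with I generated by βγ - 1, v₁ - β w₁, and v₂ - γ³w₂ - γ²w₁^k - w₁ (k ≥ 1), the elements y₁ = v₂, y₂ = βv₂ - v₁, y₃ = β²v₂ - βv₁, and ỹ₄ = βv₂^k - β³v₂ + β²v₁ all lie in the subring ℂ[γ,w₁,w₂] (equivalently equal γ³w₂ + γ²w₁^k + w₁, γ²w₂ + γw₁^k, γw₂ + w₁^k, and a polynomial in γ,w₁,w₂ respectively), and they satisfy the relation y₂ỹ₄ + y₃(y₃ - y₁^k) = 0. -/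
open MvPolynomial

set_option maxHeartbeats 2000000 in
/-- In `ℂ[β,v₁,v₂,γ,w₁,w₂]/I` with `I = (βγ-1, v₁-βw₁, v₂-γ³w₂-γ²w₁^k-w₁)`,
the elements `y₁ = v₂`, `y₂ = βv₂-v₁`, `y₃ = β²v₂-βv₁`, `ỹ₄ = βv₂^k-β³v₂+β²v₁`
lie in the subring `ℂ[γ,w₁,w₂]` (equal to `γ³w₂+γ²w₁^k+w₁`, `γ²w₂+γw₁^k`,
`γw₂+w₁^k`, and some polynomial in `γ,w₁,w₂`), and satisfy
`y₂ỹ₄ + y₃(y₃ - y₁^k) = 0`. -/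
theorem stmt7 (k : ℕ) (hk : 1 ≤ k) :
    let P := MvPolynomial (Fin 6) ℂ
    let I : Ideal P := Ideal.span
      { X 0 * X 3 - 1,
        X 1 - X 0 * X 4,
        X 2 - X 3 ^ 3 * X 5 - X 3 ^ 2 * X 4 ^ k - X 4 }
    let mk : P →+* P ⧸ I := Ideal.Quotient.mk I
    let b := mk (X 0)
    let v1 := mk (X 1)
    let v2 := mk (X 2)
    let g := mk (X 3)
    let w1 := mk (X 4)
    let w2 := mk (X 5)
    let y1 := v2
    let y2 := b * v2 - v1
    let y3 := b ^ 2 * v2 - b * v1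
    let y4 := b * v2 ^ k - b ^ 3 * v2 + b ^ 2 * v1
    y1 = g ^ 3 * w2 + g ^ 2 * w1 ^ k + w1 ∧
    y2 = g ^ 2 * w2 + g * w1 ^ k ∧
    y3 = g * w2 + w1 ^ k ∧
    (∃ p : MvPolynomial (Fin 3) ℂ, y4 = MvPolynomial.aeval ![g, w1, w2] p) ∧
    y2 * y4 + y3 * (y3 - y1 ^ k) = 0 := by
  intro P I mk b v1 v2 g w1 w2 y1 y2 y3 y4
  have mem1 : (X 0 * X 3 - 1 : P) ∈ I := Ideal.subset_span (by simp)
  have mem2 : (X 1 - X 0 * X 4 : P) ∈ I := Ideal.subset_span (by simp)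
  have mem3 : (X 2 - X 3 ^ 3 * X 5 - X 3 ^ 2 * X 4 ^ k - X 4 : P) ∈ I :=
    Ideal.subset_span (by simp)
  have e1 : b * g = 1 := by
    have h := Ideal.Quotient.eq_zero_iff_mem.mpr mem1
    rw [map_sub, map_mul, map_one, sub_eq_zero] at h
    exact h
  have e2 : v1 = b * w1 := by
    have h := Ideal.Quotient.eq_zero_iff_mem.mpr mem2
    rw [map_sub, map_mul, sub_eq_zero] at h
    exact h
  have e3 : v2 = g ^ 3 * w2 + g ^ 2 * w1 ^ k + w1 := by
    have h := Ideal.Quotient.eq_zero_iff_mem.mpr mem3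
    rw [map_sub, map_sub, map_sub, map_mul, map_mul, map_pow, map_pow, map_pow] at h
    rw [sub_eq_zero] at h
    linear_combination h
  have h2 : y2 = g ^ 2 * w2 + g * w1 ^ k := by
    show b * v2 - v1 = g ^ 2 * w2 + g * w1 ^ k
    linear_combination b * e3 - e2 + (g ^ 2 * w2 + g * w1 ^ k) * e1
  have h3 : y3 = g * w2 + w1 ^ k := by
    show b ^ 2 * v2 - b * v1 = g * w2 + w1 ^ k
    linear_combination b ^ 2 * e3 - b * e2 + (b * g + 1) * (g * w2 + w1 ^ k) * e1
  set S := ∑ i ∈ Finset.range k, v2 ^ i * w1 ^ (k - 1 - i) with hSdef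
  have hS : S * (v2 - w1) = v2 ^ k - w1 ^ k := geom_sum₂_mul v2 w1 k
  have key : b * (v2 ^ k - w1 ^ k) = (b * v2 - v1) * S := by
    linear_combination (-b) * hS + S * e2
  have key2 : b * w1 ^ k - b ^ 3 * v2 + b ^ 2 * v1 = -w2 := by
    linear_combination (-(b ^ 3)) * e3 + b ^ 2 * e2 -
      (((b * g) ^ 2 + b * g + 1) * w2 + (b * g + 1) * b * w1 ^ k) * e1
  have hy4 : y4 = (b * v2 - v1) * S - w2 := by
    show b * v2 ^ k - b ^ 3 * v2 + b ^ 2 * v1 = (b * v2 - v1) * S - w2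
    linear_combination key + key2
  refine ⟨e3, h2, h3, ⟨(X 0 ^ 2 * X 2 + X 0 * X 1 ^ k) *
      (∑ i ∈ Finset.range k, (X 0 ^ 3 * X 2 + X 0 ^ 2 * X 1 ^ k + X 1) ^ i *
        X 1 ^ (k - 1 - i)) - X 2, ?_⟩, ?_⟩
  · simp only [map_sub, map_mul, map_add, map_pow, map_sum, aeval_X,
      Matrix.cons_val_zero, Matrix.cons_val_one, Matrix.head_cons, Matrix.cons_val_two,
      Matrix.tail_cons]
    simp only [← e3, ← h2]
    rw [hy4, ← hSdef]
  · show (b * v2 - v1) * (b * v2 ^ k - b ^ 3 * v2 + b ^ 2 * v1) +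
      (b ^ 2 * v2 - b * v1) * ((b ^ 2 * v2 - b * v1) - v2 ^ k) = 0
    ring
end

section
/- Let k ≥ 1 and work modulo the ideal I = (βγ - 1, v₁ - βw₁, v₂ - γ³w₂ - γ²w₁^k - w₁²) in ℂ[β,v₁,v₂,γ,w₁,w₂]. Set X = v₂, Y = β²v₂ - v₁². Then Y ≡ γw₂ + w₁^k mod I, and for k even, with Z = β(X^{k/2} - Y) and U = v₁(X^{k/2} - Y), the relation U² - XZ² + Y(X^{k/2} - Y)² ≡ 0 mod I holds. -/
open MvPolynomial

set_option maxHeartbeats 1600000 in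
/-- Modulo `I = (βγ-1, v₁-βw₁, v₂-γ³w₂-γ²w₁^k-w₁²)` in `ℂ[β,v₁,v₂,γ,w₁,w₂]`,
with `X = v₂` and `Y = β²v₂-v₁²`, one has `Y ≡ γw₂ + w₁^k`, and for `k` even, with
`Z = β(X^{k/2}-Y)` and `U = v₁(X^{k/2}-Y)`, the relation
`U² - XZ² + Y(X^{k/2}-Y)² ≡ 0 mod I` holds. -/
theorem stmt8 (k : ℕ) (hk : 1 ≤ k) (hke : Even k) :
    let P := MvPolynomial (Fin 6) ℂ
    let I : Ideal P := Ideal.span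
      { X 0 * X 3 - 1,
        X 1 - X 0 * X 4,
        X 2 - X 3 ^ 3 * X 5 - X 3 ^ 2 * X 4 ^ k - X 4 ^ 2 }
    let mk : P →+* P ⧸ I := Ideal.Quotient.mk I
    let b := mk (X 0)
    let v1 := mk (X 1)
    let v2 := mk (X 2)
    let g := mk (X 3)
    let w1 := mk (X 4)
    let w2 := mk (X 5)
    let Xv := v2
    let Yv := b ^ 2 * v2 - v1 ^ 2
    let Zv := b * (Xv ^ (k / 2) - Yv)
    let Uv := v1 * (Xv ^ (k / 2) - Yv)
    Yv = g * w2 + w1 ^ k ∧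
    Uv ^ 2 - Xv * Zv ^ 2 + Yv * (Xv ^ (k / 2) - Yv) ^ 2 = 0 := by
  intro P I mk b v1 v2 g w1 w2 Xv Yv Zv Uv
  have e1 : b * g - 1 = 0 := by
    have h : (X 0 * X 3 - 1 : P) ∈ I := Ideal.subset_span (by simp)
    simpa [b, g, mk, sub_eq_zero] using (Ideal.Quotient.eq_zero_iff_mem).2 h
  have e2 : v1 - b * w1 = 0 := by
    have h : (X 1 - X 0 * X 4 : P) ∈ I := Ideal.subset_span (by simp)
    simpa [v1, b, w1, mk, sub_eq_zero] using (Ideal.Quotient.eq_zero_iff_mem).2 h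
  have e3 : v2 - g ^ 3 * w2 - g ^ 2 * w1 ^ k - w1 ^ 2 = 0 := by
    have h : (X 2 - X 3 ^ 3 * X 5 - X 3 ^ 2 * X 4 ^ k - X 4 ^ 2 : P) ∈ I :=
      Ideal.subset_span (by simp)
    simpa [v2, g, w1, w2, mk, sub_eq_zero] using (Ideal.Quotient.eq_zero_iff_mem).2 h
  constructor
  · show b ^ 2 * v2 - v1 ^ 2 = g * w2 + w1 ^ k
    linear_combination b ^ 2 * e3 - (v1 + b * w1) * e2 + (g * w2 + w1 ^ k) * (b * g + 1) * e1
  · simp only [Uv, Zv, Xv, Yv]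
    ring
end

section
/- The hypersurface {X² - Y³ + Z⁵ + 3TYZ² + T³Z = 0} ⊂ ℂ⁴ contains, as its hyperplane section T = 0, the E₈ surface singularity X² - Y³ + Z⁵ = 0, and the polynomial X² - Y³ + Z⁵ + 3TYZ² + T³Z is irreducible. -/
open MvPolynomial

noncomputable abbrev R3 := MvPolynomial (Fin 3) ℂ
noncomputable abbrev K3 := FractionRing R3

noncomputable def cpoly : R3 := X 0 ^ 3 - X 1 ^ 5 - 3 * X 2 * X 0 * X 1 ^ 2 - X 2 ^ 3 * X 1

lemma cpoly_not_sq (g : R3) : g ^ 2 ≠ cpoly := by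
  intro h
  have := congrArg (aeval ![(Polynomial.X : Polynomial ℂ), 0, 0]) h
  simp only [cpoly, map_sub, map_pow, map_mul, aeval_X] at this
  have h3 : (aeval ![(Polynomial.X : Polynomial ℂ), 0, 0] g) ^ 2 = Polynomial.X ^ 3 := by
    simpa using this
  have hne : (aeval ![(Polynomial.X : Polynomial ℂ), 0, 0] g) ≠ 0 := by
    intro h0; rw [h0] at h3; simpa using h3.symm
  have := congrArg Polynomial.natDegree h3
  rw [Polynomial.natDegree_pow, Polynomial.natDegree_X_pow] at this
  omega

lemma cpoly_not_sq_K (b : K3) : b ^ 2 ≠ algebraMap R3 K3 cpoly := by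
  intro h
  have hint : IsIntegral R3 b := by
    refine ⟨Polynomial.X ^ 2 - Polynomial.C cpoly, ?_, ?_⟩
    · exact (Polynomial.monic_X_pow 2).sub_of_left
        (by simpa using Polynomial.degree_C_le.trans_lt (by norm_num))
    · simp [h]
  obtain ⟨g, rfl⟩ := IsIntegrallyClosed.isIntegral_iff.mp hint
  rw [← map_pow] at h
  exact cpoly_not_sq g ((IsFractionRing.injective R3 K3) h)

lemma irred_aux : Irreducible (Polynomial.X ^ 2 - Polynomial.C cpoly) := by
  rw [(Polynomial.monic_X_pow_sub_C cpoly
    (by norm_num)).irreducible_iff_irreducible_map_fraction_map (K := K3)]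
  rw [Polynomial.map_sub, Polynomial.map_pow, Polynomial.map_X, Polynomial.map_C]
  exact (X_pow_sub_C_irreducible_iff_of_prime Nat.prime_two).mpr cpoly_not_sq_K

/-- The threefold `X² - Y³ + Z⁵ + 3TYZ² + T³Z = 0` in `ℂ⁴` has hyperplane section
`T = 0` equal to the `E₈` surface singularity `X² - Y³ + Z⁵ = 0`, and the defining
polynomial is irreducible. -/
theorem stmt9 :
    let f : MvPolynomial (Fin 4) ℂ :=
      X 0 ^ 2 - X 1 ^ 3 + X 2 ^ 5 + 3 * X 3 * X 1 * X 2 ^ 2 + X 3 ^ 3 * X 2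
    MvPolynomial.aeval ![(X 0 : MvPolynomial (Fin 3) ℂ), X 1, X 2, 0] f
      = X 0 ^ 2 - X 1 ^ 3 + X 2 ^ 5 ∧
    Irreducible f := by
  intro f
  constructor
  · simp [f]
  · refine (MulEquiv.irreducible_iff
      (MvPolynomial.finSuccEquiv ℂ 3).toRingEquiv.toMulEquiv).mp ?_
    have hf : (MvPolynomial.finSuccEquiv ℂ 3) f = Polynomial.X ^ 2 - Polynomial.C cpoly := by
      have h1 : (X 1 : MvPolynomial (Fin 4) ℂ) = X (Fin.succ 0) := rfl
      have h2 : (X 2 : MvPolynomial (Fin 4) ℂ) = X (Fin.succ 1) := rfl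
      have h3 : (X 3 : MvPolynomial (Fin 4) ℂ) = X (Fin.succ 2) := rfl
      simp only [f, h1, h2, h3, map_add, map_sub, map_pow, map_mul, map_ofNat,
        finSuccEquiv_X_zero, finSuccEquiv_X_succ, cpoly, map_sub, map_mul, map_pow]
      ring_nf
    show Irreducible ((MvPolynomial.finSuccEquiv ℂ 3) f)
    rw [hf]
    exact irred_aux
end

section
/- Let φ = [[-y, z², tz],[t, -y, z²],[z, t, -y]] and ψ = [[y²-tz², yz²+t²z, z⁴+tyz],[z³+ty, y²-tz², yz²+t²z],[yz+t², z³+ty, y²-tz²]] over ℂ[y,z,t]. Then φψ = ψφ = (-y³ + z⁵ + 3tyz² + t³z)·I₃. -/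
open MvPolynomial

set_option maxHeartbeats 2000000 in
/-- The 3×3 matrices `φ` and `ψ` over `ℂ[y,z,t]` give a matrix factorization of
`-y³ + z⁵ + 3tyz² + t³z`: `φψ = ψφ = (-y³ + z⁵ + 3tyz² + t³z)·I₃`. -/
theorem stmt10 :
    let y : MvPolynomial (Fin 3) ℂ := X 0
    let z : MvPolynomial (Fin 3) ℂ := X 1
    let t : MvPolynomial (Fin 3) ℂ := X 2
    let φ : Matrix (Fin 3) (Fin 3) (MvPolynomial (Fin 3) ℂ) :=
      !![-y, z ^ 2, t * z;
         t, -y, z ^ 2;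
         z, t, -y]
    let ψ : Matrix (Fin 3) (Fin 3) (MvPolynomial (Fin 3) ℂ) :=
      !![y ^ 2 - t * z ^ 2, y * z ^ 2 + t ^ 2 * z, z ^ 4 + t * y * z;
         z ^ 3 + t * y, y ^ 2 - t * z ^ 2, y * z ^ 2 + t ^ 2 * z;
         y * z + t ^ 2, z ^ 3 + t * y, y ^ 2 - t * z ^ 2]
    let f : MvPolynomial (Fin 3) ℂ := -y ^ 3 + z ^ 5 + 3 * t * y * z ^ 2 + t ^ 3 * z
    φ * ψ = f • (1 : Matrix (Fin 3) (Fin 3) (MvPolynomial (Fin 3) ℂ)) ∧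
    ψ * φ = f • (1 : Matrix (Fin 3) (Fin 3) (MvPolynomial (Fin 3) ℂ)) := by
  intro y z t φ ψ f
  have tac : ∀ A : Matrix (Fin 3) (Fin 3) (MvPolynomial (Fin 3) ℂ),
      (∀ i j, A i j = (f • (1 : Matrix (Fin 3) (Fin 3) (MvPolynomial (Fin 3) ℂ))) i j) →
      A = f • 1 := fun A h => Matrix.ext h
  constructor
  · rw [show φ * ψ = _ from Matrix.mul_fin_three ..]
    refine tac _ fun i j => ?_
    fin_cases i <;> fin_cases j <;>
      simp [Matrix.smul_apply, Matrix.one_apply, f] <;> ring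
  · rw [show ψ * φ = _ from Matrix.mul_fin_three ..]
    refine tac _ fun i j => ?_
    fin_cases i <;> fin_cases j <;>
      simp [Matrix.smul_apply, Matrix.one_apply, f] <;> ring
end

section
/- Given the matrix factorization (φ,ψ) of f over a commutative ring R (so φψ = ψφ = f·I_n), the block matrices A = [[ψ, -xI],[xI, φ]] and B = [[φ, xI],[-xI, ψ]] over R[x] satisfy AB = BA = (x² + f)·I_{2n}. -/
/-- Knörrer periodicity: given a matrix factorization `(φ,ψ)` of `f` over a
commutative ring `R` (i.e. `φψ = ψφ = f·Iₙ`), the block matrices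
`A = [[ψ, -xI],[xI, φ]]` and `B = [[φ, xI],[-xI, ψ]]` over `R[x]` satisfy
`AB = BA = (x² + f)·I_{2n}`. -/
theorem stmt11 {R : Type*} [CommRing R] (n : ℕ) (f : R)
    (φ ψ : Matrix (Fin n) (Fin n) R)
    (h1 : φ * ψ = f • (1 : Matrix (Fin n) (Fin n) R))
    (h2 : ψ * φ = f • (1 : Matrix (Fin n) (Fin n) R)) :
    let xI : Matrix (Fin n) (Fin n) (Polynomial R) :=
      (Polynomial.X : Polynomial R) • (1 : Matrix (Fin n) (Fin n) (Polynomial R))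
    let A := Matrix.fromBlocks (ψ.map ⇑Polynomial.C) (-xI) xI (φ.map ⇑Polynomial.C)
    let B := Matrix.fromBlocks (φ.map ⇑Polynomial.C) xI (-xI) (ψ.map ⇑Polynomial.C)
    A * B = (Polynomial.X ^ 2 + Polynomial.C f) •
        (1 : Matrix (Fin n ⊕ Fin n) (Fin n ⊕ Fin n) (Polynomial R)) ∧
    B * A = (Polynomial.X ^ 2 + Polynomial.C f) •
        (1 : Matrix (Fin n ⊕ Fin n) (Fin n ⊕ Fin n) (Polynomial R)) := by
  intro xI A B
  have hm1 : φ.map ⇑Polynomial.C * ψ.map ⇑Polynomial.C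
      = Polynomial.C f • (1 : Matrix (Fin n) (Fin n) (Polynomial R)) := by
    rw [← Matrix.map_mul, h1]
    ext i j
    simp [Matrix.one_apply, apply_ite]
  have hm2 : ψ.map ⇑Polynomial.C * φ.map ⇑Polynomial.C
      = Polynomial.C f • (1 : Matrix (Fin n) (Fin n) (Polynomial R)) := by
    rw [← Matrix.map_mul, h2]
    ext i j
    simp [Matrix.one_apply, apply_ite]
  constructor <;>
  · show Matrix.fromBlocks _ _ _ _ * Matrix.fromBlocks _ _ _ _ = _
    rw [Matrix.fromBlocks_multiply]
    simp only [xI, Matrix.neg_mul, Matrix.mul_neg, neg_neg, Matrix.smul_mul,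
      Matrix.mul_smul, Matrix.one_mul, Matrix.mul_one, hm1, hm2, smul_smul,
      ← sq, ← Matrix.fromBlocks_smul, Matrix.fromBlocks_one, add_smul]
    abel_nf
    simp only [smul_pow, one_pow, neg_one_sq, one_smul, ← add_smul, add_comm]
    conv_rhs => rw [← Matrix.fromBlocks_one (m := Fin n), Matrix.fromBlocks_smul, smul_zero]
end

section
/- For m odd with 1 ≤ m ≤ n, the 4×4 matrices R = [[-iX, Z^{(m+1)/2}, -Y, 0],[Z^{n+1-(m+1)/2}, iX, 0, -Y],[-YZ, 0, -iX, Z^{(m+1)/2}],[0, -YZ, Z^{n+1-(m+1)/2}, iX]] and S = [[-iX, Z^{(m+1)/2}, Y, 0],[Z^{n+1-(m+1)/2}, iX, 0, Y],[YZ, 0, -iX, Z^{(m+1)/2}],[0, YZ, Z^{n+1-(m+1)/2}, iX]] over ℂ[X,Y,Z] satisfy S·R = R·S = (-X² - Y²Z + Z^{n+1})·I₄. -/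
/-!
Both matrices are 2×2 block matrices `[[A, ∓Y], [∓YZ, A]]` over the traceless block
`A = [[-iX, Z^a], [Z^b, iX]]` with `a + b = n + 1`, so `A² = (Z^{n+1} - X²)·I₂` by
Cayley–Hamilton. The off-diagonal blocks are scalars, hence commute with `A`, and the
cross terms cancel: `S·R = R·S = (A² - Y²Z)·I₄`.
-/

open MvPolynomial Matrix

namespace Matrix

variable {α : Type*}

theorem reindex_fromBlocks_fin_two (A B C D : Matrix (Fin 2) (Fin 2) α) :
    reindex finSumFinEquiv finSumFinEquiv (fromBlocks A B C D) =
      !![A 0 0, A 0 1, B 0 0, B 0 1;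
         A 1 0, A 1 1, B 1 0, B 1 1;
         C 0 0, C 0 1, D 0 0, D 0 1;
         C 1 0, C 1 1, D 1 0, D 1 1] := by
  ext i j
  fin_cases i <;> fin_cases j <;> rfl

variable [CommRing α]

theorem traceless_fin_two_mul_self (t u v : α) :
    !![-t, u; v, t] * !![-t, u; v, t] = (t ^ 2 + u * v) • (1 : Matrix (Fin 2) (Fin 2) α) := by
  rw [mul_fin_two, one_fin_two, smul_of]
  ext i j
  fin_cases i <;> fin_cases j <;> simp <;> ring

theorem fromBlocks_smul_one_mul_fromBlocks_neg_smul_one {n : Type*} [Fintype n] [DecidableEq n]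
    {A : Matrix n n α} {f : α} (hA : A * A = f • 1) (y w : α) :
    fromBlocks A (y • 1) (w • 1) A * fromBlocks A (-y • 1) (-w • 1) A = (f - y * w) • 1 := by
  rw [fromBlocks_multiply, ← fromBlocks_one, fromBlocks_smul, smul_zero]
  congr 1 <;> simp [hA, smul_smul, mul_comm w y, sub_smul] <;> abel

end Matrix

theorem stmt12_general (n m : ℕ) (hmn : m ≤ n) :
    let Xv : MvPolynomial (Fin 3) ℂ := X 0
    let Yv : MvPolynomial (Fin 3) ℂ := X 1
    let Zv : MvPolynomial (Fin 3) ℂ := X 2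
    let i : MvPolynomial (Fin 3) ℂ := MvPolynomial.C Complex.I
    let R : Matrix (Fin 4) (Fin 4) (MvPolynomial (Fin 3) ℂ) :=
      !![-(i * Xv), Zv ^ ((m + 1) / 2), -Yv, 0;
         Zv ^ (n + 1 - (m + 1) / 2), i * Xv, 0, -Yv;
         -(Yv * Zv), 0, -(i * Xv), Zv ^ ((m + 1) / 2);
         0, -(Yv * Zv), Zv ^ (n + 1 - (m + 1) / 2), i * Xv]
    let S : Matrix (Fin 4) (Fin 4) (MvPolynomial (Fin 3) ℂ) :=
      !![-(i * Xv), Zv ^ ((m + 1) / 2), Yv, 0;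
         Zv ^ (n + 1 - (m + 1) / 2), i * Xv, 0, Yv;
         Yv * Zv, 0, -(i * Xv), Zv ^ ((m + 1) / 2);
         0, Yv * Zv, Zv ^ (n + 1 - (m + 1) / 2), i * Xv]
    S * R = (-Xv ^ 2 - Yv ^ 2 * Zv + Zv ^ (n + 1)) •
        (1 : Matrix (Fin 4) (Fin 4) (MvPolynomial (Fin 3) ℂ)) ∧
    R * S = (-Xv ^ 2 - Yv ^ 2 * Zv + Zv ^ (n + 1)) •
        (1 : Matrix (Fin 4) (Fin 4) (MvPolynomial (Fin 3) ℂ)) := by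
  intro Xv Yv Zv i R S
  set A : Matrix (Fin 2) (Fin 2) (MvPolynomial (Fin 3) ℂ) :=
    !![-(i * Xv), Zv ^ ((m + 1) / 2); Zv ^ (n + 1 - (m + 1) / 2), i * Xv]
  have hA : A * A = (-Xv ^ 2 + Zv ^ (n + 1)) • 1 := by
    have hi : i ^ 2 = -1 := by simp [i, ← map_pow]
    rw [traceless_fin_two_mul_self, ← pow_add,
      show (m + 1) / 2 + (n + 1 - (m + 1) / 2) = n + 1 by omega, mul_pow, hi, neg_one_mul]
  let e := reindexAlgEquiv (MvPolynomial (Fin 3) ℂ) (MvPolynomial (Fin 3) ℂ)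
    (finSumFinEquiv (m := 2) (n := 2))
  have hR : R = e (fromBlocks A (-Yv • 1) (-(Yv * Zv) • 1) A) := by
    simp only [e, coe_reindexAlgEquiv, reindex_fromBlocks_fin_two]
    simp [R, A]
  have hS : S = e (fromBlocks A (Yv • 1) ((Yv * Zv) • 1) A) := by
    simp only [e, coe_reindexAlgEquiv, reindex_fromBlocks_fin_two]
    simp [S, A]
  have hSR := fromBlocks_smul_one_mul_fromBlocks_neg_smul_one hA Yv (Yv * Zv)
  have hRS := fromBlocks_smul_one_mul_fromBlocks_neg_smul_one hA (-Yv) (-(Yv * Zv))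
  rw [neg_neg, neg_neg] at hRS
  constructor
  · rw [hR, hS, ← map_mul, hSR, map_smul, map_one]
    congr 1; ring
  · rw [hR, hS, ← map_mul, hRS, map_smul, map_one]
    congr 1; ring

/-- For `m` odd with `1 ≤ m ≤ n`, the 4×4 matrices `R` and `S` over `ℂ[X,Y,Z]`
built from `X, Y, Z^{(m+1)/2}, Z^{n+1-(m+1)/2}` give a matrix factorization of the
`D_{n+2}` equation: `S·R = R·S = (-X² - Y²Z + Z^{n+1})·I₄`. -/
theorem stmt12 (n m : ℕ) (hm : Odd m) (hm1 : 1 ≤ m) (hmn : m ≤ n) :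
    let Xv : MvPolynomial (Fin 3) ℂ := X 0
    let Yv : MvPolynomial (Fin 3) ℂ := X 1
    let Zv : MvPolynomial (Fin 3) ℂ := X 2
    let i : MvPolynomial (Fin 3) ℂ := MvPolynomial.C Complex.I
    let R : Matrix (Fin 4) (Fin 4) (MvPolynomial (Fin 3) ℂ) :=
      !![-(i * Xv), Zv ^ ((m + 1) / 2), -Yv, 0;
         Zv ^ (n + 1 - (m + 1) / 2), i * Xv, 0, -Yv;
         -(Yv * Zv), 0, -(i * Xv), Zv ^ ((m + 1) / 2);
         0, -(Yv * Zv), Zv ^ (n + 1 - (m + 1) / 2), i * Xv]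
    let S : Matrix (Fin 4) (Fin 4) (MvPolynomial (Fin 3) ℂ) :=
      !![-(i * Xv), Zv ^ ((m + 1) / 2), Yv, 0;
         Zv ^ (n + 1 - (m + 1) / 2), i * Xv, 0, Yv;
         Yv * Zv, 0, -(i * Xv), Zv ^ ((m + 1) / 2);
         0, Yv * Zv, Zv ^ (n + 1 - (m + 1) / 2), i * Xv]
    S * R = (-Xv ^ 2 - Yv ^ 2 * Zv + Zv ^ (n + 1)) •
        (1 : Matrix (Fin 4) (Fin 4) (MvPolynomial (Fin 3) ℂ)) ∧
    R * S = (-Xv ^ 2 - Yv ^ 2 * Zv + Zv ^ (n + 1)) •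
        (1 : Matrix (Fin 4) (Fin 4) (MvPolynomial (Fin 3) ℂ)) :=
  stmt12_general n m hmn
end

section
/- Modulo the ideal I = (βγ - 1, v₁ - βw₁, v₂ - γ³w₂ - γw₁²) in ℂ[β,v₁,v₂,γ,w₁,w₂] (the D̂ case), the elements y₁ = v₂, y₂ = βv₂, y₃ = v₁v₂, y₄ = β³v₂ - v₁² are congruent to γ³w₂ + γw₁², γ²w₂ + w₁², γ²w₁w₂ + w₁³, and w₂ respectively, and they satisfy the relation y₃² - y₂³ + y₁²y₄ ≡ 0 mod I. -/
open MvPolynomial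

set_option maxHeartbeats 2000000 in
/-- In the `D̂` case, modulo `I = (βγ-1, v₁-βw₁, v₂-γ³w₂-γw₁²)`, the elements
`y₁ = v₂, y₂ = βv₂, y₃ = v₁v₂, y₄ = β³v₂-v₁²` are congruent to
`γ³w₂+γw₁², γ²w₂+w₁², γ²w₁w₂+w₁³, w₂` respectively, and satisfy
`y₃² - y₂³ + y₁²y₄ ≡ 0 mod I`. -/
theorem stmt15 :
    let P := MvPolynomial (Fin 6) ℂ
    let I : Ideal P := Ideal.span
      { X 0 * X 3 - 1,
        X 1 - X 0 * X 4,
        X 2 - X 3 ^ 3 * X 5 - X 3 * X 4 ^ 2 }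
    let mk : P →+* P ⧸ I := Ideal.Quotient.mk I
    let b := mk (X 0)
    let v1 := mk (X 1)
    let v2 := mk (X 2)
    let g := mk (X 3)
    let w1 := mk (X 4)
    let w2 := mk (X 5)
    let y1 := v2
    let y2 := b * v2
    let y3 := v1 * v2
    let y4 := b ^ 3 * v2 - v1 ^ 2
    y1 = g ^ 3 * w2 + g * w1 ^ 2 ∧
    y2 = g ^ 2 * w2 + w1 ^ 2 ∧
    y3 = g ^ 2 * w1 * w2 + w1 ^ 3 ∧
    y4 = w2 ∧
    y3 ^ 2 - y2 ^ 3 + y1 ^ 2 * y4 = 0 := by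
  intro P I mk b v1 v2 g w1 w2 y1 y2 y3 y4
  have h1 : b * g - 1 = 0 := by
    have : mk (X 0 * X 3 - 1) = 0 :=
      Ideal.Quotient.eq_zero_iff_mem.mpr (Ideal.subset_span (by left; rfl))
    simpa [b, g, mk] using this
  have h2 : v1 - b * w1 = 0 := by
    have : mk (X 1 - X 0 * X 4) = 0 :=
      Ideal.Quotient.eq_zero_iff_mem.mpr (Ideal.subset_span (by right; left; rfl))
    simpa [v1, b, w1, mk] using this
  have h3 : v2 - g ^ 3 * w2 - g * w1 ^ 2 = 0 := by
    have : mk (X 2 - X 3 ^ 3 * X 5 - X 3 * X 4 ^ 2) = 0 :=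
      Ideal.Quotient.eq_zero_iff_mem.mpr (Ideal.subset_span (by right; right; rfl))
    simpa [v2, g, w1, w2, mk] using this
  have e1 : y1 = g ^ 3 * w2 + g * w1 ^ 2 := by
    show v2 = _; linear_combination h3
  have e2 : y2 = g ^ 2 * w2 + w1 ^ 2 := by
    show b * v2 = _
    linear_combination b * h3 + (g ^ 2 * w2 + w1 ^ 2) * h1
  have e3 : y3 = g ^ 2 * w1 * w2 + w1 ^ 3 := by
    show v1 * v2 = _
    linear_combination v2 * h2 + b * w1 * h3 + (g ^ 2 * w1 * w2 + w1 ^ 3) * h1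
  have e4 : y4 = w2 := by
    show b ^ 3 * v2 - v1 ^ 2 = _
    linear_combination b ^ 3 * h3 + ((b * g) ^ 2 + b * g + 1) * w2 * h1
      + b ^ 2 * w1 ^ 2 * h1 - (v1 + b * w1) * h2
  refine ⟨e1, e2, e3, e4, ?_⟩
  linear_combination (y3 + (g ^ 2 * w1 * w2 + w1 ^ 3)) * e3
    - (y2 ^ 2 + y2 * (g ^ 2 * w2 + w1 ^ 2) + (g ^ 2 * w2 + w1 ^ 2) ^ 2) * e2
    + (y1 + (g ^ 3 * w2 + g * w1 ^ 2)) * y4 * e1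
    + (g ^ 3 * w2 + g * w1 ^ 2) ^ 2 * e4
end

section
/- Modulo the ideal I = (βγ - 1, v₁ - βw₁, v₂ - γ³w₂ - γ²w₁) in ℂ[β,v₁,v₂,γ,w₁,w₂] (the Â case), the elements y₁ = v₂, y₂ = βv₂, y₃ = β²v₂, y₄ = β³v₂ - v₁ are congruent to γ³w₂ + γ²w₁, γ²w₂ + γw₁, γw₂ + w₁, and w₂ respectively, and they satisfy y₂² - y₁y₃ ≡ 0 mod I, with y₄ algebraically independent of y₁,y₂,y₃. -/
open MvPolynomial

/-!
The congruences follow from the relations `βγ = 1`, `v₁ = βw₁`, `v₂ = γ³w₂ + γ²w₁` by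
substitution. For the transcendence, send the quotient to the rational function field in
`t₀, t₁, t₂` by `γ ↦ t₀, β ↦ t₀⁻¹, w₁ ↦ t₁ - t₀t₂, w₂ ↦ t₂`. Then `γ, y₃, w₂` go to `t₀, t₁, t₂`,
so they are algebraically independent, and `y₁ = γ²y₃`, `y₂ = γy₃` lie in `ℂ[γ, y₃]`.
-/

namespace AhatChart

section Relations

variable {A : Type*} [CommRing A] {β γ v₁ v₂ w₁ w₂ : A}

theorem y₂_eq (hβγ : β * γ = 1) (hv₂ : v₂ = γ ^ 3 * w₂ + γ ^ 2 * w₁) :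
    β * v₂ = γ ^ 2 * w₂ + γ * w₁ := by
  linear_combination β * hv₂ + (γ ^ 2 * w₂ + γ * w₁) * hβγ

theorem y₃_eq (hβγ : β * γ = 1) (hv₂ : v₂ = γ ^ 3 * w₂ + γ ^ 2 * w₁) :
    β ^ 2 * v₂ = γ * w₂ + w₁ := by
  linear_combination β ^ 2 * hv₂ + (γ * w₂ + w₁) * (β * γ + 1) * hβγ

theorem y₄_eq (hβγ : β * γ = 1) (hv₁ : v₁ = β * w₁) (hv₂ : v₂ = γ ^ 3 * w₂ + γ ^ 2 * w₁) :
    β ^ 3 * v₂ - v₁ = w₂ := by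
  linear_combination β ^ 3 * hv₂ - hv₁ +
    (w₂ * ((β * γ) ^ 2 + β * γ + 1) + β * w₁ * (β * γ + 1)) * hβγ

end Relations

variable (R : Type*) [CommRing R]

/-- Variables `0, …, 5` stand for `β, v₁, v₂, γ, w₁, w₂`. -/
noncomputable def ideal : Ideal (MvPolynomial (Fin 6) R) :=
  Ideal.span {X 0 * X 3 - 1, X 1 - X 0 * X 4, X 2 - X 3 ^ 3 * X 5 - X 3 ^ 2 * X 4}

noncomputable def coord (i : Fin 6) : MvPolynomial (Fin 6) R ⧸ ideal R :=
  Ideal.Quotient.mk (ideal R) (X i)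

theorem coord_eq_of_sub_mem {i : Fin 6} {p : MvPolynomial (Fin 6) R} (h : X i - p ∈ ideal R) :
    coord R i = Ideal.Quotient.mk (ideal R) p :=
  (Ideal.Quotient.mk_eq_mk_iff_sub_mem _ _).2 h

theorem coord_zero_mul_coord_three : coord R 0 * coord R 3 = 1 := by
  rw [coord, coord, ← map_mul, ← map_one (Ideal.Quotient.mk (ideal R)),
    Ideal.Quotient.mk_eq_mk_iff_sub_mem]
  exact Ideal.subset_span (by simp)

theorem coord_one_eq : coord R 1 = coord R 0 * coord R 4 := by
  rw [coord_eq_of_sub_mem R (p := X 0 * X 4) (Ideal.subset_span (by simp)), map_mul]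
  rfl

theorem coord_two_eq : coord R 2 = coord R 3 ^ 3 * coord R 5 + coord R 3 ^ 2 * coord R 4 := by
  rw [coord_eq_of_sub_mem R (p := X 3 ^ 3 * X 5 + X 3 ^ 2 * X 4)
      (Ideal.subset_span (by simp [sub_add_eq_sub_sub])),
    map_add, map_mul, map_mul, map_pow, map_pow]
  rfl

noncomputable def ratVar (i : Fin 3) : FractionRing (MvPolynomial (Fin 3) R) :=
  algebraMap (MvPolynomial (Fin 3) R) _ (X i)

theorem algebraicIndependent_ratVar : AlgebraicIndependent R (ratVar R) :=
  (algebraicIndependent_X (Fin 3) R).map'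
    (f := IsScalarTower.toAlgHom R (MvPolynomial (Fin 3) R) (FractionRing (MvPolynomial (Fin 3) R)))
    (IsFractionRing.injective _ _)

variable [IsDomain R]

noncomputable def ratPoint : Fin 6 → FractionRing (MvPolynomial (Fin 3) R) :=
  let t := ratVar R
  ![(t 0)⁻¹, (t 0)⁻¹ * (t 1 - t 0 * t 2), t 0 ^ 2 * t 1, t 0, t 1 - t 0 * t 2, t 2]

noncomputable def toRatFunc :
    MvPolynomial (Fin 6) R ⧸ ideal R →ₐ[R] FractionRing (MvPolynomial (Fin 3) R) :=
  Ideal.Quotient.liftₐ (ideal R) (aeval (ratPoint R)) fun a ha => by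
    refine (Ideal.span_le (I := RingHom.ker (aeval (ratPoint R)))).2 ?_ ha
    simp [ratPoint, Set.insert_subset_iff,
      inv_mul_cancel₀ ((algebraicIndependent_ratVar R).ne_zero 0)]
    ring

theorem toRatFunc_coord (i : Fin 6) : toRatFunc R (coord R i) = ratPoint R i :=
  aeval_X _ i

theorem algebraicIndependent_γ_y₃_w₂ :
    AlgebraicIndependent R ![coord R 3, coord R 0 ^ 2 * coord R 2, coord R 5] := by
  refine .of_comp (toRatFunc R) ?_
  convert algebraicIndependent_ratVar R
  funext i
  fin_cases i <;> simp [toRatFunc_coord, ratPoint]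
  field_simp [(algebraicIndependent_ratVar R).ne_zero 0]

theorem transcendental_y₄ :
    Transcendental (Algebra.adjoin R {coord R 2, coord R 0 * coord R 2, coord R 0 ^ 2 * coord R 2})
      (coord R 0 ^ 3 * coord R 2 - coord R 1) := by
  have hβγ := coord_zero_mul_coord_three R
  have hv₂ := coord_two_eq R
  rw [y₄_eq hβγ (coord_one_eq R) hv₂]
  have hy₁ : coord R 2 = coord R 3 ^ 2 * (coord R 0 ^ 2 * coord R 2) := by
    rw [y₃_eq hβγ hv₂, hv₂]; ring
  have hy₂ : coord R 0 * coord R 2 = coord R 3 * (coord R 0 ^ 2 * coord R 2) := by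
    rw [y₃_eq hβγ hv₂, y₂_eq hβγ hv₂]; ring
  set γ := coord R 3
  set y₃ := coord R 0 ^ 2 * coord R 2
  have hγ : γ ∈ Algebra.adjoin R {γ, y₃} := Algebra.subset_adjoin (by simp)
  have hy₃ : y₃ ∈ Algebra.adjoin R {γ, y₃} := Algebra.subset_adjoin (by simp)
  have htr := (algebraicIndependent_γ_y₃_w₂ R).transcendental_adjoin
    (s := {0, 1}) (i := 2) (by decide)
  rw [show ![γ, y₃, coord R 5] '' {0, 1} = {γ, y₃} by simp [Set.image_insert_eq]] at htr
  refine htr.of_tower_top_of_subalgebra_le (Algebra.adjoin_le ?_)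
  simp only [Set.insert_subset_iff, Set.singleton_subset_iff, SetLike.mem_coe]
  exact ⟨hy₁ ▸ mul_mem (pow_mem hγ 2) hy₃, hy₂ ▸ mul_mem hγ hy₃, hy₃⟩

end AhatChart

/-- In the `Â` case, modulo `I = (βγ-1, v₁-βw₁, v₂-γ³w₂-γ²w₁)`, the elements
`y₁ = v₂, y₂ = βv₂, y₃ = β²v₂, y₄ = β³v₂-v₁` are congruent to
`γ³w₂+γ²w₁, γ²w₂+γw₁, γw₂+w₁, w₂` respectively, satisfy `y₂² - y₁y₃ ≡ 0 mod I`,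
and `y₄` is algebraically independent of (transcendental over the subalgebra
generated by) `y₁, y₂, y₃`. -/
theorem stmt16 :
    let P := MvPolynomial (Fin 6) ℂ
    let I : Ideal P := Ideal.span
      { X 0 * X 3 - 1,
        X 1 - X 0 * X 4,
        X 2 - X 3 ^ 3 * X 5 - X 3 ^ 2 * X 4 }
    let mk : P →+* P ⧸ I := Ideal.Quotient.mk I
    let b := mk (X 0)
    let v1 := mk (X 1)
    let v2 := mk (X 2)
    let g := mk (X 3)
    let w1 := mk (X 4)
    let w2 := mk (X 5)
    let y1 := v2
    let y2 := b * v2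
    let y3 := b ^ 2 * v2
    let y4 := b ^ 3 * v2 - v1
    y1 = g ^ 3 * w2 + g ^ 2 * w1 ∧
    y2 = g ^ 2 * w2 + g * w1 ∧
    y3 = g * w2 + w1 ∧
    y4 = w2 ∧
    y2 ^ 2 - y1 * y3 = 0 ∧
    Transcendental (Algebra.adjoin ℂ {y1, y2, y3}) y4 := by
  intro P I mk b v1 v2 g w1 w2 y1 y2 y3 y4
  have hβγ : b * g = 1 := AhatChart.coord_zero_mul_coord_three ℂ
  have hv₁ : v1 = b * w1 := AhatChart.coord_one_eq ℂ
  have hv₂ : v2 = g ^ 3 * w2 + g ^ 2 * w1 := AhatChart.coord_two_eq ℂ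
  exact ⟨hv₂, AhatChart.y₂_eq hβγ hv₂, AhatChart.y₃_eq hβγ hv₂, AhatChart.y₄_eq hβγ hv₁ hv₂,
    by simp only [y1, y2, y3]; ring, AhatChart.transcendental_y₄ ℂ⟩
end

section
/- The affine curve in ℂ³ defined by the ideal (Y² + XZ, X³ + YZ, Z² - X²Y, X⁴ - Y³) is the image of the parametrization t ↦ (X,Y,Z) = (t³, t⁴, -t⁵): every point of this parametrized curve satisfies all four equations, and conversely every point of the variety with X ≠ 0 lies on the parametrized curve. -/
/-!
The curve is quasi-homogeneous of weights `(3, 4, 5)`, so off `X = 0` the parameter is recovered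
as `t = Y / X`, of weight `1`. The equations `X⁴ = Y³` and `Y² + XZ = 0` then give
`t³ = Y³ / X³ = X`, `t⁴ = Y⁴ / X⁴ = Y` and `t⁵ = Y² / X = -Z`.
-/

section WeightedCurve

variable {K : Type*} [Field K] {X Y Z : K}

lemma exists_eq_pow_three_pow_four_neg_pow_five (h₁ : Y ^ 2 + X * Z = 0) (h₄ : X ^ 4 = Y ^ 3)
    (hX : X ≠ 0) : ∃ t : K, X = t ^ 3 ∧ Y = t ^ 4 ∧ Z = -(t ^ 5) := by
  have hZ : Z = -Y ^ 2 / X := by field_simp; linear_combination h₁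
  refine ⟨Y / X, ?_, ?_, ?_⟩
  · field_simp
    linear_combination h₄
  · field_simp
    linear_combination Y * h₄
  · rw [hZ]
    field_simp
    linear_combination -Y ^ 2 * h₄

end WeightedCurve

/-- The affine curve `(Y²+XZ, X³+YZ, Z²-X²Y, X⁴-Y³) = 0` in `ℂ³` is the image of
`t ↦ (t³, t⁴, -t⁵)`: every point of the parametrized curve satisfies the four
equations, and every point of the variety with `X ≠ 0` is on the parametrized
curve. -/
theorem stmt17 :
    (∀ t : ℂ,
      (t ^ 4) ^ 2 + t ^ 3 * (-(t ^ 5)) = 0 ∧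
      (t ^ 3) ^ 3 + t ^ 4 * (-(t ^ 5)) = 0 ∧
      (-(t ^ 5)) ^ 2 - (t ^ 3) ^ 2 * t ^ 4 = 0 ∧
      (t ^ 3) ^ 4 - (t ^ 4) ^ 3 = 0) ∧
    (∀ X Y Z : ℂ,
      Y ^ 2 + X * Z = 0 → X ^ 3 + Y * Z = 0 → Z ^ 2 - X ^ 2 * Y = 0 →
      X ^ 4 - Y ^ 3 = 0 → X ≠ 0 →
      ∃ t : ℂ, X = t ^ 3 ∧ Y = t ^ 4 ∧ Z = -(t ^ 5)) := by
  refine ⟨fun t => ⟨by ring, by ring, by ring, by ring⟩, ?_⟩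
  intro X Y Z h₁ _ _ h₄ hX
  exact exists_eq_pow_three_pow_four_neg_pow_five h₁ (sub_eq_zero.mp h₄) hX
end
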